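/- Let τ_m > 0 and let z be a complex number with Im(z) > 0. Then the error of the Chiarella–Reichel series approximation of the complex error function admits the exact representation (1/√π)·∫_0^{∞} exp(−τ²/4)·exp(izτ) dτ − [ i/(τ_m·z) − 2i·τ_m·z·∑_{n=1}^{∞} exp(−n²π²/τ_m²)/(n²π² − τ_m²z²) ] = (1/√π)·∫_0^{∞} ( exp(−τ²/4) − ∑_{k∈ℤ} exp(−(τ + 2kτ_m)²/4) )·exp(izτ) dτ. -/

import Mathlib

/-!
Poisson summation turns the periodized Gaussian into the absolutely convergent Fourier series
`G_p(τ) = (√π / τm) ∑_{n ∈ ℤ} e^{-(n h)²} e^{-i n h τ}` with `h = π / τm`. Since `Im z > 0`, the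
series may be integrated termwise against `e^{i z τ}` over `(0, ∞)`, each term contributing
`e^{-(n h)²} · i / (z - n h)`; pairing `n` with `-n` gives `2 i z / (z² - n² h²)`, which is the
Chiarella–Reichel series. Subtracting this from the integral defining `w(z)` gives the identity.
-/

open Real MeasureTheory Complex Set

lemma norm_exp_I_mul_mul_ofReal (z : ℂ) (τ : ℝ) :
    ‖cexp (I * z * τ)‖ = Real.exp (-z.im * τ) := by
  simp [norm_exp, mul_re]

lemma integral_exp_I_mul_Ioi {z : ℂ} (hz : 0 < z.im) :
    ∫ τ in Ioi (0 : ℝ), cexp (I * z * τ) = I / z := by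
  have hz0 : z ≠ 0 := fun h ↦ by simp [h] at hz
  rw [integral_exp_mul_complex_Ioi (by simpa using hz), ofReal_zero, mul_zero, Complex.exp_zero]
  field_simp
  simp

lemma integrableOn_gaussian_mul_exp {z : ℂ} (hz : 0 < z.im) :
    IntegrableOn (fun τ : ℝ ↦ cexp (-(τ : ℂ) ^ 2 / 4) * cexp (I * z * τ)) (Ioi 0) := by
  refine Integrable.mono' (integrableOn_exp_mul_Ioi (neg_lt_zero.2 hz) 0)
    (by fun_prop : Continuous _).aestronglyMeasurable ?_
  filter_upwards with τ
  rw [norm_mul, norm_exp_I_mul_mul_ofReal]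
  refine mul_le_of_le_one_left (Real.exp_pos _).le ?_
  have hre : (-(τ : ℂ) ^ 2 / 4).re = -τ ^ 2 / 4 := by norm_cast
  rw [norm_exp, hre, Real.exp_le_one_iff]
  nlinarith [sq_nonneg τ]

noncomputable def trigSeries {ι : Type*} (a : ι → ℂ) (ω : ι → ℝ) (τ : ℝ) : ℂ :=
  ∑' n, a n * cexp (-I * ω n * τ)

section TrigSeries

variable {ι : Type*} {a : ι → ℂ} (ω : ι → ℝ) {z : ℂ}

lemma norm_mul_exp_neg_I_mul (n : ι) (τ : ℝ) : ‖a n * cexp (-I * ω n * τ)‖ = ‖a n‖ := by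
  simp [norm_exp]

lemma continuous_trigSeries (ha : Summable (‖a ·‖)) : Continuous (trigSeries a ω) :=
  continuous_tsum (fun n ↦ by fun_prop) ha fun n τ ↦ (norm_mul_exp_neg_I_mul ω n τ).le

lemma norm_trigSeries_le (ha : Summable (‖a ·‖)) (τ : ℝ) : ‖trigSeries a ω τ‖ ≤ ∑' n, ‖a n‖ := by
  simpa only [trigSeries, norm_mul_exp_neg_I_mul] using
    norm_tsum_le_tsum_norm (ha.congr fun n ↦ (norm_mul_exp_neg_I_mul ω n τ).symm)

lemma integrableOn_trigSeries_mul_exp (ha : Summable (‖a ·‖)) (hz : 0 < z.im) :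
    IntegrableOn (fun τ : ℝ ↦ trigSeries a ω τ * cexp (I * z * τ)) (Ioi 0) := by
  refine Integrable.mono'
    ((integrableOn_exp_mul_Ioi (neg_lt_zero.2 hz) 0).const_mul (∑' n, ‖a n‖))
    ((continuous_trigSeries ω ha).mul (by fun_prop)).aestronglyMeasurable ?_
  filter_upwards with τ
  rw [norm_mul, norm_exp_I_mul_mul_ofReal]
  gcongr
  exact norm_trigSeries_le ω ha τ

lemma hasSum_integral_trigSeries_mul_exp [Countable ι] (ha : Summable (‖a ·‖)) (hz : 0 < z.im) :
    HasSum (fun n ↦ a n * (I / (z - ω n)))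
      (∫ τ in Ioi 0, trigSeries a ω τ * cexp (I * z * τ)) := by
  have him (n : ι) : 0 < (z - ω n).im := by simpa using hz
  let F (n : ι) (τ : ℝ) : ℂ := a n * cexp (I * (z - ω n) * τ)
  have hF_int (n : ι) : IntegrableOn (F n) (Ioi 0) :=
    (integrableOn_exp_mul_complex_Ioi (by simpa using him n) 0).const_mul _
  have hF_norm (n : ι) :
      ∫ τ in Ioi 0, ‖F n τ‖ = ‖a n‖ * ∫ τ in Ioi (0 : ℝ), Real.exp (-z.im * τ) := by
    simp only [F, norm_mul, norm_exp_I_mul_mul_ofReal, sub_im, ofReal_im, sub_zero]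
    exact integral_const_mul _ _
  have hF_sum (τ : ℝ) : ∑' n, F n τ = trigSeries a ω τ * cexp (I * z * τ) := by
    rw [trigSeries, ← tsum_mul_right]
    congr 1 with n
    simp only [F, mul_assoc, ← Complex.exp_add]
    ring_nf
  have hF_integral (n : ι) : ∫ τ in Ioi 0, F n τ = a n * (I / (z - ω n)) := by
    simp only [F, integral_const_mul, integral_exp_I_mul_Ioi (him n)]
  simpa only [hF_integral, hF_sum] using hasSum_integral_of_summable_integral_norm hF_int
    (by simpa only [hF_norm] using ha.mul_right _)

end TrigSeries

lemma I_div_sub_add_I_div_add {z : ℂ} (hz : 0 < z.im) (r : ℝ) :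
    I / (z - r) + I / (z + r) = 2 * I * z / (z ^ 2 - r ^ 2) := by
  have hsub : z - r ≠ 0 := fun h ↦ hz.ne' (by simpa using congrArg im h)
  have hadd : z + r ≠ 0 := fun h ↦ hz.ne' (by simpa using congrArg im h)
  rw [div_add_div _ _ hsub hadd, show z ^ 2 - r ^ 2 = (z - r) * (z + r) by ring]
  ring

lemma hasSum_nat_I_div_sq_sub_sq {c : ℤ → ℂ} (hc : ∀ n, c (-n) = c n) {z : ℂ} (hz : 0 < z.im)
    {h : ℝ} {S : ℂ} (hS : HasSum (fun n : ℤ ↦ c n * (I / (z - (n * h : ℝ)))) S) :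
    HasSum (fun n : ℕ ↦ c (n + 1) * (2 * I * z / (z ^ 2 - ((n + 1) * h : ℝ) ^ 2)))
      (S - c 0 * (I / z)) := by
  have hpairs := (hasSum_nat_add_iff' 1).2 hS.nat_add_neg
  simp only [Finset.sum_range_one, Nat.cast_zero, neg_zero, Int.cast_zero, zero_mul, ofReal_zero,
    sub_zero] at hpairs
  rw [show ∀ a b : ℂ, a + b - (b + b) = a - b by intros; ring] at hpairs
  refine hpairs.congr_fun fun n ↦ ?_
  have hr := I_div_sub_add_I_div_add hz ((n + 1) * h)
  push_cast at hr ⊢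
  rw [hc, ← mul_add, ← hr]
  ring_nf

lemma summable_exp_neg_mul_int_sq {c : ℝ} (hc : 0 < c) :
    Summable fun n : ℤ ↦ Real.exp (-c * n ^ 2) := by
  have hτ : 0 < (I * (c / π : ℝ)).im := by simpa using div_pos hc pi_pos
  refine ((summable_jacobiTheta₂_term_iff 0 _).2 hτ).norm.congr fun n ↦ ?_
  rw [norm_jacobiTheta₂_term]
  congr 1
  simp only [mul_im, I_re, I_im, ofReal_re, ofReal_im, zero_im]
  field_simp
  ring

noncomputable def periodizedGaussian (τm τ : ℝ) : ℝ :=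
  ∑' k : ℤ, Real.exp (-(τ + 2 * k * τm) ^ 2 / 4)

lemma periodizedGaussian_eq_trigSeries {τm : ℝ} (hτm : 0 < τm) (τ : ℝ) :
    (periodizedGaussian τm τ : ℂ) = (√π / τm : ℝ) *
      trigSeries (fun n : ℤ ↦ (Real.exp (-(n * (π / τm)) ^ 2) : ℂ)) (fun n ↦ n * (π / τm)) τ := by
  have hτm0 : (τm : ℂ) ≠ 0 := ofReal_ne_zero.2 hτm.ne'
  have hπ : (π : ℂ) ≠ 0 := ofReal_ne_zero.2 pi_ne_zero
  have ha : 0 < ((π / τm ^ 2 : ℝ) : ℂ).re := by rw [ofReal_re]; positivity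
  have poisson := Complex.tsum_exp_neg_quadratic ha (-I * τ / (2 * τm))
  have hsqrt : (1 : ℂ) / ((π / τm ^ 2 : ℝ) : ℂ) ^ (1 / 2 : ℂ) = (τm / √π : ℝ) := by
    rw [show (1 / 2 : ℂ) = ((1 / 2 : ℝ) : ℂ) by norm_num, ← ofReal_cpow (by positivity),
      ← sqrt_eq_rpow, sqrt_div pi_pos.le, sqrt_sq hτm.le, one_div, ← ofReal_inv, inv_div]
  have hlhs : ∑' n : ℤ, cexp (-π * ((π / τm ^ 2 : ℝ) : ℂ) * n ^ 2 + 2 * π * (-I * τ / (2 * τm)) * n)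
      = trigSeries (fun n : ℤ ↦ (Real.exp (-(n * (π / τm)) ^ 2) : ℂ)) (fun n ↦ n * (π / τm)) τ := by
    refine tsum_congr fun n ↦ ?_
    dsimp only
    rw [ofReal_exp, ← Complex.exp_add]
    congr 1
    push_cast
    field_simp
  have hrhs : ∑' n : ℤ, cexp (-π / ((π / τm ^ 2 : ℝ) : ℂ) * (n + I * (-I * τ / (2 * τm))) ^ 2)
      = periodizedGaussian τm τ := by
    rw [periodizedGaussian, ofReal_tsum]
    refine tsum_congr fun n ↦ ?_
    rw [ofReal_exp]
    congr 1
    push_cast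
    field_simp
    linear_combination (16 * τm * n * τ + 4 * τ ^ 2 * (1 - I ^ 2) : ℂ) * I_sq
  rw [hlhs, hsqrt, hrhs] at poisson
  rw [poisson, ← mul_assoc, ← ofReal_mul, div_mul_div_cancel₀ (by positivity),
    div_self (sqrt_pos.2 pi_pos).ne', ofReal_one, one_mul]

lemma summable_norm_exp_neg_int_mul_sq {h : ℝ} (hh : h ≠ 0) :
    Summable fun n : ℤ ↦ ‖(Real.exp (-(n * h) ^ 2) : ℂ)‖ := by
  refine (summable_exp_neg_mul_int_sq (pow_pos (abs_pos.2 hh) 2)).congr fun n ↦ ?_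
  rw [norm_real, Real.norm_of_nonneg (Real.exp_pos _).le, sq_abs]
  ring_nf

lemma integrableOn_periodizedGaussian_mul_exp {τm : ℝ} (hτm : 0 < τm) {z : ℂ} (hz : 0 < z.im) :
    IntegrableOn (fun τ : ℝ ↦ (periodizedGaussian τm τ : ℂ) * cexp (I * z * τ)) (Ioi 0) := by
  have hseries := integrableOn_trigSeries_mul_exp (fun n : ℤ ↦ n * (π / τm))
    (summable_norm_exp_neg_int_mul_sq (h := π / τm) (by positivity)) hz
  refine IntegrableOn.congr_fun (hseries.const_mul ((√π / τm : ℝ) : ℂ)) (fun τ _ ↦ ?_)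
    measurableSet_Ioi
  rw [periodizedGaussian_eq_trigSeries hτm]
  ring

lemma hasSum_integral_periodizedGaussian_mul_exp {τm : ℝ} (hτm : 0 < τm) {z : ℂ} (hz : 0 < z.im) :
    HasSum (fun n : ℤ ↦ (Real.exp (-(n * (π / τm)) ^ 2) : ℂ) * (I / (z - (n * (π / τm) : ℝ))))
      (τm / √π * ∫ τ in Ioi 0, (periodizedGaussian τm τ : ℂ) * cexp (I * z * τ)) := by
  have hsqrt : (√π : ℂ) ≠ 0 := ofReal_ne_zero.2 (sqrt_pos.2 pi_pos).ne'
  have hτm0 : (τm : ℂ) ≠ 0 := ofReal_ne_zero.2 hτm.ne'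
  simp_rw [periodizedGaussian_eq_trigSeries hτm, mul_assoc, integral_const_mul, ← mul_assoc]
  push_cast
  rw [div_mul_div_cancel₀ hsqrt, div_self hτm0, one_mul]
  exact_mod_cast hasSum_integral_trigSeries_mul_exp (fun n : ℤ ↦ n * (π / τm))
    (summable_norm_exp_neg_int_mul_sq (h := π / τm) (by positivity)) hz

theorem chiarellaReichel_eq_integral_periodizedGaussian {τm : ℝ} (hτm : 0 < τm) {z : ℂ}
    (hz : 0 < z.im) :
    I / (τm * z) - 2 * I * τm * z * ∑' n : ℕ, cexp (-((n : ℂ) + 1) ^ 2 * π ^ 2 / τm ^ 2) /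
        (((n : ℂ) + 1) ^ 2 * π ^ 2 - τm ^ 2 * z ^ 2) =
      1 / √π * ∫ τ in Ioi 0, (periodizedGaussian τm τ : ℂ) * cexp (I * z * τ) := by
  have hτm0 : (τm : ℂ) ≠ 0 := ofReal_ne_zero.2 hτm.ne'
  have hsqrt : (√π : ℂ) ≠ 0 := ofReal_ne_zero.2 (sqrt_pos.2 pi_pos).ne'
  have hz0 : z ≠ 0 := fun h ↦ by simp [h] at hz
  have hpairs := hasSum_nat_I_div_sq_sub_sq (c := fun n : ℤ ↦ (Real.exp (-(n * (π / τm)) ^ 2) : ℂ))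
    (fun n ↦ by simp) hz (hasSum_integral_periodizedGaussian_mul_exp hτm hz)
  have hterm (n : ℕ) : (Real.exp (-(((n : ℤ) + 1 : ℤ) * (π / τm)) ^ 2) : ℂ) *
      (2 * I * z / (z ^ 2 - (((n : ℝ) + 1) * (π / τm) : ℝ) ^ 2)) =
      -2 * I * τm ^ 2 * z * (cexp (-((n : ℂ) + 1) ^ 2 * π ^ 2 / τm ^ 2) /
        (((n : ℂ) + 1) ^ 2 * π ^ 2 - τm ^ 2 * z ^ 2)) := by
    have hden : z ^ 2 - (((n : ℝ) + 1) * (π / τm) : ℝ) ^ 2 =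
        -(((n : ℂ) + 1) ^ 2 * π ^ 2 - τm ^ 2 * z ^ 2) / τm ^ 2 := by
      push_cast
      field_simp
      ring
    rw [hden, ofReal_exp]
    push_cast
    field_simp
  have hsum := (hpairs.congr_fun fun n ↦ (hterm n).symm).tsum_eq
  rw [tsum_mul_left] at hsum
  simp only [Int.cast_zero, zero_mul, zero_pow two_ne_zero, neg_zero, Real.exp_zero, ofReal_one,
    one_mul] at hsum
  generalize (∑' n : ℕ, _ : ℂ) = X at hsum ⊢
  generalize (∫ τ : ℝ in Ioi 0, _ : ℂ) = J at hsum ⊢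
  field_simp at hsum ⊢
  linear_combination hsum

/-- For `τm > 0` and `z : ℂ` with `Im z > 0`, the error of the Chiarella–Reichel series
approximation of the complex error function admits the exact representation
`(1/√π)·∫_0^∞ e^{−τ²/4}·e^{izτ} dτ − [i/(τm z) − 2i·τm·z·∑_{n=1}^∞ e^{−n²π²/τm²}/(n²π² − τm²z²)]
  = (1/√π)·∫_0^∞ (e^{−τ²/4} − ∑_{k∈ℤ} e^{−(τ+2kτm)²/4})·e^{izτ} dτ`. -/
theorem chiarella_reichel_error_rep (τm : ℝ) (hτm : 0 < τm) (z : ℂ) (hz : 0 < z.im) :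
    (1 / (Real.sqrt π : ℂ)) *
        (∫ τ in Set.Ioi (0:ℝ),
          Complex.exp (-(τ : ℂ) ^ 2 / 4) * Complex.exp (Complex.I * z * τ)) -
      (Complex.I / ((τm : ℂ) * z) -
        2 * Complex.I * (τm : ℂ) * z *
          ∑' n : ℕ,
            Complex.exp (-((n : ℂ) + 1) ^ 2 * (π : ℂ) ^ 2 / (τm : ℂ) ^ 2) /
              (((n : ℂ) + 1) ^ 2 * (π : ℂ) ^ 2 - (τm : ℂ) ^ 2 * z ^ 2)) =
      (1 / (Real.sqrt π : ℂ)) *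
        ∫ τ in Set.Ioi (0:ℝ),
          ((Real.exp (-τ ^ 2 / 4) -
              ∑' k : ℤ, Real.exp (-(τ + 2 * k * τm) ^ 2 / 4) : ℝ) : ℂ) *
            Complex.exp (Complex.I * z * τ) := by
  rw [chiarellaReichel_eq_integral_periodizedGaussian hτm hz, ← mul_sub,
    ← integral_sub (integrableOn_gaussian_mul_exp hz)
      (integrableOn_periodizedGaussian_mul_exp hτm hz)]
  congr 2 with τ
  rw [periodizedGaussian, ofReal_sub, ofReal_exp, sub_mul]
  congr 3
  push_cast
  ring
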